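/- The asymmetric grid failprone system 𝔽 = [ℱ_1, …, ℱ_d], consisting of the failprone system for A_i-believers for each attribute A_i, is B³-resilient: for all indices i, j, all F_i ∈ ℱ_i, all F_j ∈ ℱ_j, and all F_{i,j} ∈ ℱ_i* ∩ ℱ_j*, the union F_i ∪ F_j ∪ F_{i,j} is a proper subset of 𝒫. -/

import Mathlib

/-- `f_i = ⌈k_i/3⌉ − 1`: number of attribute values of `A i` with full failures. -/
noncomputable def fNum {d : ℕ} (A : Fin d → Type) [∀ j, Fintype (A j)] (i : Fin d) : ℤ :=
  ⌈(Fintype.card (A i) : ℚ) / 3⌉ - 1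

/-- `α_i = ⌈n/(6k_i)⌉ − 1`: number of partial-failure processes per attribute value. -/
noncomputable def alphaNum {d : ℕ} (A : Fin d → Type) [∀ j, Fintype (A j)] (i : Fin d) : ℤ :=
  ⌈(Fintype.card (∀ j, A j) : ℚ) / (6 * (Fintype.card (A i) : ℚ))⌉ - 1

/-- `full(F) = 𝒫|_{A_i ∈ 𝒜'}`: the full failures determined by a set `𝒜'` of values of `A i`. -/
def fullOf {d : ℕ} (A : Fin d → Type) [∀ j, Fintype (A j)] [∀ j, DecidableEq (A j)]
    (i : Fin d) (A' : Finset (A i)) : Finset (∀ j, A j) :=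
  Finset.univ.filter (fun p => p i ∈ A')

/-- `partial(F) = ⊔_{a ∈ 𝒜_i ∖ 𝒜'} X_a`: the partial failures. -/
def partialOf {d : ℕ} (A : Fin d → Type) [∀ j, Fintype (A j)] [∀ j, DecidableEq (A j)]
    (i : Fin d) (A' : Finset (A i)) (X : A i → Finset (∀ j, A j)) : Finset (∀ j, A j) :=
  A'ᶜ.biUnion X

/-- `F` decomposes as `F = full(F) ⊔ partial(F)` with witnesses `A'` (of prescribed
cardinality `fval`) and `X`, where `X a ⊆ 𝒫|_{A_i = a}` and `|X a| = α_i` for every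
`a ∈ 𝒜_i ∖ 𝒜'`. -/
noncomputable def IsDecompGen {d : ℕ} (A : Fin d → Type) [∀ j, Fintype (A j)]
    [∀ j, DecidableEq (A j)] (i : Fin d) (fval : ℤ) (F : Finset (∀ j, A j))
    (A' : Finset (A i)) (X : A i → Finset (∀ j, A j)) : Prop :=
  (A'.card : ℤ) = fval ∧
  (∀ a ∈ A'ᶜ, X a ⊆ Finset.univ.filter (fun p => p i = a)) ∧
  (∀ a ∈ A'ᶜ, ((X a).card : ℤ) = alphaNum A i) ∧
  F = fullOf A i A' ∪ partialOf A i A' X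

/-- Membership in the failprone system `ℱ_i` for `A_i`-believers. -/
noncomputable def IsFailprone {d : ℕ} (A : Fin d → Type) [∀ j, Fintype (A j)]
    [∀ j, DecidableEq (A j)] (i : Fin d) (F : Finset (∀ j, A j)) : Prop :=
  ∃ A' X, IsDecompGen A i (fNum A i) F A' X

/-- `ℱ*`: the collection of all subsets of members of the failprone system `ℱ_i`. -/
noncomputable def InFailproneStar {d : ℕ} (A : Fin d → Type) [∀ j, Fintype (A j)]
    [∀ j, DecidableEq (A j)] (i : Fin d) (F : Finset (∀ j, A j)) : Prop :=
  ∃ G, IsFailprone A i G ∧ F ⊆ G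

/-!
If `i = j`, the three members of `ℱ_i` involved fail fully on at most `3 f_i < k_i` values of
`A_i`, so some value `a` is fully failed by none of them. The slice `A_i = a` has `n / k_i`
processes, of which the three sets contain at most `3 α_i < n / (2 k_i)`.

If `i ≠ j`, let `G_i ∈ ℱ_i` and `G_j ∈ ℱ_j` contain `F_{i,j}`, put `s = n / (k_i k_j)`, and count
in the region where `A_i` avoids the full failures of `F_i` and `A_j` those of `F_j`; it has
`p_i p_j s` processes. There `F_i` and `F_j` contain only partial failures, and a process of
`F_{i,j}` is either fully failed by both `G_i` and `G_j` or a partial failure of one of them.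
Since `α_i < k_j s / 6` and `f_i < k_i / 3`, all of these are fewer than `p_i p_j s`.
-/

open Finset

section ProductCounting
variable {ι : Type*} [Fintype ι] [DecidableEq ι] {A : ι → Type*}

lemma card_piFinset_update_mul (s : ∀ l, Finset (A l)) (i : ι) (t : Finset (A i)) :
    #(Fintype.piFinset (Function.update s i t)) * #(s i) = #t * #(Fintype.piFinset s) := by
  have hcard : (fun l => #(Function.update s i t l)) =
      Function.update (fun l => #(s l)) i #t := by
    funext l
    exact Function.apply_update (fun _ => card) s i t l
  rw [Fintype.card_piFinset, Fintype.card_piFinset, hcard, prod_update_of_mem (mem_univ i),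
    prod_eq_mul_prod_sdiff_singleton_of_mem (mem_univ i)]
  ring

variable [∀ l, Fintype (A l)] [∀ l, DecidableEq (A l)]

lemma piFinset_update_univ (i : ι) (S : Finset (A i)) :
    Fintype.piFinset (Function.update (fun l => (univ : Finset (A l))) i S) =
      ({p | p i ∈ S} : Finset (∀ l, A l)) := by
  rw [Fintype.piFinset_update_eq_filter_piFinset_mem _ _ (subset_univ S), Fintype.piFinset_univ]

lemma card_filter_apply_mem_mul (i : ι) (S : Finset (A i)) :
    #{p : ∀ l, A l | p i ∈ S} * Fintype.card (A i) = #S * Fintype.card (∀ l, A l) := by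
  simpa [piFinset_update_univ] using card_piFinset_update_mul (fun l => (univ : Finset (A l))) i S

lemma card_filter_apply_mem_and_apply_mem_mul {i j : ι} (hij : i ≠ j) (S : Finset (A i))
    (T : Finset (A j)) :
    #{p : ∀ l, A l | p i ∈ S ∧ p j ∈ T} * (Fintype.card (A i) * Fintype.card (A j)) =
      #S * #T * Fintype.card (∀ l, A l) := by
  set s := Function.update (fun l => (univ : Finset (A l))) i S
  have hsj : s j = univ := Function.update_of_ne hij.symm _ _
  have hbox : Fintype.piFinset (Function.update s j T) =
      ({p | p i ∈ S ∧ p j ∈ T} : Finset (∀ l, A l)) := by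
    rw [Fintype.piFinset_update_eq_filter_piFinset_mem _ _ (hsj ▸ subset_univ T),
      piFinset_update_univ, filter_filter]
  have h := card_piFinset_update_mul s j T
  rw [hsj, card_univ, hbox, piFinset_update_univ] at h
  rw [mul_comm (Fintype.card (A i)), ← mul_assoc, h, mul_assoc, card_filter_apply_mem_mul]
  ring

lemma card_filter_apply_mem_and_apply_mem {i j : ι} (hij : i ≠ j)
    (hi : 0 < Fintype.card (A i)) (hj : 0 < Fintype.card (A j)) (S : Finset (A i))
    (T : Finset (A j)) :
    (#{p : ∀ l, A l | p i ∈ S ∧ p j ∈ T} : ℚ) =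
      #S * #T * (Fintype.card (∀ l, A l) / (Fintype.card (A i) * Fintype.card (A j))) := by
  rw [mul_div, eq_div_iff (by positivity)]
  exact_mod_cast card_filter_apply_mem_and_apply_mem_mul hij S T

end ProductCounting

lemma union_ssubset_univ_of_card_lt {α : Type*} [Fintype α] [DecidableEq α]
    {F G H F' G' H' Ω : Finset α} (hF : F ∩ Ω ⊆ F') (hG : G ∩ Ω ⊆ G') (hH : H ∩ Ω ⊆ H')
    (hcard : #F' + #G' + #H' < #Ω) : F ∪ G ∪ H ⊂ univ := by
  rw [ssubset_univ_iff]
  intro hU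
  have hΩ : Ω ⊆ F' ∪ G' ∪ H' := by
    intro p hp
    have hpU : p ∈ F ∪ G ∪ H := hU ▸ mem_univ p
    simp only [mem_union] at hpU ⊢
    rcases hpU with (h | h) | h
    · exact Or.inl (Or.inl (hF (mem_inter.2 ⟨h, hp⟩)))
    · exact Or.inl (Or.inr (hG (mem_inter.2 ⟨h, hp⟩)))
    · exact Or.inr (hH (mem_inter.2 ⟨h, hp⟩))
  have := (card_le_card hΩ).trans
    ((card_union_le _ _).trans (Nat.add_le_add_right (card_union_le _ _) _))
  omega

lemma region_failures_lt {K : Type*} [Field K] [LinearOrder K] [IsStrictOrderedRing K]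
    {ki kj fi fj ai aj r c s : K} (hfi : fi < ki / 3) (hfj : fj < kj / 3)
    (hai : ai < kj * s / 6) (haj : aj < ki * s / 6) (hr : 0 ≤ r) (hrf : r ≤ fi) (hc : 0 ≤ c)
    (hcf : c ≤ fj) (hs : 0 ≤ s) :
    (ki - fi) * ai + (kj - fj) * aj + (r * c * s + (ki - fi - r) * ai + (kj - fj - c) * aj) <
      (ki - fi) * (kj - fj) * s := by
  have hrc : 6 * (r * c) ≤ r * kj + c * ki := by
    nlinarith [mul_nonneg hr (by linarith : 0 ≤ kj - 3 * c),
      mul_nonneg hc (by linarith : 0 ≤ ki - 3 * r)]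
  have hk : 2 * (ki - fi) * kj + 2 * (kj - fj) * ki ≤ 6 * (ki - fi) * (kj - fj) := by
    nlinarith [mul_nonneg (by linarith : 0 ≤ ki - fi) (by linarith : 0 ≤ kj - 3 * fj),
      mul_nonneg (by linarith : 0 ≤ kj - fj) (by linarith : 0 ≤ ki - 3 * fi)]
  calc _ = (2 * (ki - fi) - r) * ai + (2 * (kj - fj) - c) * aj + r * c * s := by ring
    _ < (2 * (ki - fi) - r) * (kj * s / 6) + (2 * (kj - fj) - c) * (ki * s / 6) + r * c * s := by
        gcongr <;> linarith
    _ = s / 6 * (2 * (ki - fi) * kj + 2 * (kj - fj) * ki - (r * kj + c * ki - 6 * (r * c))) := by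
        ring
    _ ≤ s / 6 * (6 * (ki - fi) * (kj - fj)) := by gcongr; linarith
    _ = _ := by ring

section Failprone
variable {d : ℕ} {A : Fin d → Type} [∀ l, Fintype (A l)]

lemma fNum_lt (i : Fin d) : (fNum A i : ℚ) < Fintype.card (A i) / 3 := by
  have := Int.ceil_lt_add_one ((Fintype.card (A i) : ℚ) / 3)
  unfold fNum
  push_cast
  linarith

lemma alphaNum_lt (i : Fin d) :
    (alphaNum A i : ℚ) < Fintype.card (∀ l, A l) / (6 * Fintype.card (A i)) := by
  have := Int.ceil_lt_add_one ((Fintype.card (∀ l, A l) : ℚ) / (6 * Fintype.card (A i)))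
  unfold alphaNum
  push_cast
  linarith

variable [∀ l, DecidableEq (A l)]

namespace IsDecompGen
variable {i : Fin d} {fv : ℤ} {F : Finset (∀ l, A l)} {A' : Finset (A i)}
  {X : A i → Finset (∀ l, A l)}

lemma card_eq (h : IsDecompGen A i fv F A' X) : (#A' : ℚ) = fv := by
  exact_mod_cast h.1

lemma card_pos (h : IsDecompGen A i (fNum A i) F A' X) : 0 < Fintype.card (A i) := by
  have : (0 : ℚ) < Fintype.card (A i) := by
    linarith [fNum_lt (A := A) i, h.card_eq ▸ Nat.cast_nonneg (α := ℚ) #A']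
  exact_mod_cast this

lemma card_compl_eq (h : IsDecompGen A i fv F A' X) :
    (#A'ᶜ : ℚ) = Fintype.card (A i) - fv := by
  rw [← h.card_eq]
  exact eq_sub_of_add_eq (by exact_mod_cast card_compl_add_card A')

lemma card_compl_union_eq (h : IsDecompGen A i fv F A' X) (T : Finset (A i)) :
    (#(A' ∪ T)ᶜ : ℚ) = Fintype.card (A i) - fv - #(T \ A') := by
  have hcompl : (#(A' ∪ T)ᶜ : ℚ) + #(A' ∪ T) = Fintype.card (A i) := by
    exact_mod_cast card_compl_add_card _
  have hunion : (#(T \ A') : ℚ) + #A' = #(A' ∪ T) := by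
    rw [union_comm]
    exact_mod_cast card_sdiff_add_card _ _
  linarith [h.card_eq]

lemma card_apply (h : IsDecompGen A i fv F A' X) {a : A i} (ha : a ∉ A') :
    (#(X a) : ℚ) = alphaNum A i := by
  exact_mod_cast h.2.2.1 a (mem_compl.2 ha)

lemma mem_of_apply_notMem (h : IsDecompGen A i fv F A' X) {p : ∀ l, A l} (hp : p ∈ F)
    (hpi : p i ∉ A') : p ∈ X (p i) := by
  obtain ⟨-, hX, -, rfl⟩ := h
  simp only [fullOf, partialOf, mem_union, mem_filter, mem_univ, true_and, mem_biUnion] at hp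
  rcases hp with hp | ⟨a, ha, hpa⟩
  · exact absurd hp hpi
  · obtain rfl : p i = a := by simpa using hX a ha hpa
    exact hpa

lemma inter_filter_apply_eq_subset (h : IsDecompGen A i fv F A' X) {a : A i} (ha : a ∉ A') :
    F ∩ ({p | p i = a} : Finset (∀ l, A l)) ⊆ X a := by
  intro p hp
  obtain ⟨hpF, hpa⟩ := mem_inter.1 hp
  obtain rfl : p i = a := by simpa using hpa
  exact h.mem_of_apply_notMem hpF ha

lemma mem_biUnion_of_apply_mem (h : IsDecompGen A i fv F A' X) {S : Finset (A i)}
    (hS : S ⊆ A'ᶜ) {p : ∀ l, A l} (hp : p ∈ F) (hpi : p i ∈ S) : p ∈ S.biUnion X :=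
  mem_biUnion.2 ⟨p i, hpi, h.mem_of_apply_notMem hp (mem_compl.1 (hS hpi))⟩

lemma card_biUnion_le (h : IsDecompGen A i fv F A' X) {S : Finset (A i)} (hS : S ⊆ A'ᶜ) :
    (#(S.biUnion X) : ℚ) ≤ #S * alphaNum A i :=
  calc (#(S.biUnion X) : ℚ) ≤ ∑ a ∈ S, (#(X a) : ℚ) := by exact_mod_cast Finset.card_biUnion_le
    _ = ∑ _a ∈ S, (alphaNum A i : ℚ) :=
      sum_congr rfl fun a ha => h.card_apply (mem_compl.1 (hS ha))
    _ = #S * alphaNum A i := by rw [sum_const, nsmul_eq_mul]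

end IsDecompGen

lemma union_ssubset_univ_of_eq {i : Fin d} {Fi Fj Fij : Finset (∀ l, A l)}
    (hFi : IsFailprone A i Fi) (hFj : IsFailprone A i Fj) (hFij : InFailproneStar A i Fij) :
    Fi ∪ Fj ∪ Fij ⊂ univ := by
  obtain ⟨R, X, hR⟩ := hFi
  obtain ⟨C, Y, hC⟩ := hFj
  obtain ⟨G, ⟨R', X', hR'⟩, hG⟩ := hFij
  obtain ⟨a, -, ha⟩ : ∃ a ∈ univ, a ∉ R ∪ C ∪ R' := by
    refine exists_mem_notMem_of_card_lt_card (((card_union_le _ _).trans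
      (Nat.add_le_add_right (card_union_le _ _) _)).trans_lt ?_)
    have hlt : (#R : ℚ) + #C + #R' < #(univ : Finset (A i)) := by
      rw [card_univ, hR.card_eq, hC.card_eq, hR'.card_eq]
      linarith [fNum_lt (A := A) i]
    exact_mod_cast hlt
  simp only [mem_union, not_or] at ha
  obtain ⟨⟨haR, haC⟩, haR'⟩ := ha
  set col : Finset (∀ l, A l) := {p | p i = a}
  have hcol : (#col : ℚ) * Fintype.card (A i) = Fintype.card (∀ l, A l) := by
    have := card_filter_apply_mem_mul (A := A) i {a}
    simp only [mem_singleton, card_singleton, one_mul] at this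
    exact_mod_cast this
  refine union_ssubset_univ_of_card_lt (hR.inter_filter_apply_eq_subset haR)
    (hC.inter_filter_apply_eq_subset haC)
    ((inter_subset_inter_right hG).trans (hR'.inter_filter_apply_eq_subset haR')) ?_
  have hα : (alphaNum A i : ℚ) < #col / 6 := by
    have hk : (Fintype.card (A i) : ℚ) ≠ 0 := Nat.cast_ne_zero.2 hR.card_pos.ne'
    convert alphaNum_lt (A := A) i using 1
    rw [← hcol]
    field_simp
  have hlt : (#(X a) : ℚ) + #(Y a) + #(X' a) < #col := by
    rw [hR.card_apply haR, hC.card_apply haC, hR'.card_apply haR']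
    linarith [Nat.cast_nonneg (α := ℚ) #col]
  exact_mod_cast hlt

lemma card_region_failures_lt {i j : Fin d} (hij : i ≠ j) {Fi Fj Gi Gj : Finset (∀ l, A l)}
    {R R' : Finset (A i)} {C C' : Finset (A j)} {X X' : A i → Finset (∀ l, A l)}
    {Y Y' : A j → Finset (∀ l, A l)}
    (hR : IsDecompGen A i (fNum A i) Fi R X) (hC : IsDecompGen A j (fNum A j) Fj C Y)
    (hR' : IsDecompGen A i (fNum A i) Gi R' X') (hC' : IsDecompGen A j (fNum A j) Gj C' Y') :
    #(Rᶜ.biUnion X) + #(Cᶜ.biUnion Y) +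
        #(({p | p i ∈ R' \ R ∧ p j ∈ C' \ C} : Finset (∀ l, A l)) ∪ (R ∪ R')ᶜ.biUnion X' ∪
          (C ∪ C')ᶜ.biUnion Y') <
      #({p | p i ∈ Rᶜ ∧ p j ∈ Cᶜ} : Finset (∀ l, A l)) := by
  set B : Finset (∀ l, A l) := {p | p i ∈ R' \ R ∧ p j ∈ C' \ C}
  set Ω : Finset (∀ l, A l) := {p | p i ∈ Rᶜ ∧ p j ∈ Cᶜ}
  have hbox := card_filter_apply_mem_and_apply_mem hij hR.card_pos hC.card_pos
  set s : ℚ := Fintype.card (∀ l, A l) / (Fintype.card (A i) * Fintype.card (A j)) with hs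
  have hki : (Fintype.card (A i) : ℚ) ≠ 0 := Nat.cast_ne_zero.2 hR.card_pos.ne'
  have hkj : (Fintype.card (A j) : ℚ) ≠ 0 := Nat.cast_ne_zero.2 hC.card_pos.ne'
  have hαi : (alphaNum A i : ℚ) < Fintype.card (A j) * s / 6 := by
    convert alphaNum_lt (A := A) i using 1
    rw [hs]
    field_simp
  have hαj : (alphaNum A j : ℚ) < Fintype.card (A i) * s / 6 := by
    convert alphaNum_lt (A := A) j using 1
    rw [hs]
    field_simp
  have hr : (#(R' \ R) : ℚ) ≤ fNum A i :=
    hR'.card_eq ▸ by exact_mod_cast card_le_card sdiff_subset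
  have hc : (#(C' \ C) : ℚ) ≤ fNum A j :=
    hC'.card_eq ▸ by exact_mod_cast card_le_card sdiff_subset
  have hΩ : (#Ω : ℚ) = (Fintype.card (A i) - fNum A i) * (Fintype.card (A j) - fNum A j) * s := by
    rw [← hR.card_compl_eq, ← hC.card_compl_eq]
    exact hbox _ _
  have hB : (#B : ℚ) = #(R' \ R) * #(C' \ C) * s := hbox _ _
  have hX := hR.card_compl_eq ▸ hR.card_biUnion_le subset_rfl
  have hY := hC.card_compl_eq ▸ hC.card_biUnion_le subset_rfl
  have hX' := hR.card_compl_union_eq R' ▸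
    hR'.card_biUnion_le (compl_subset_compl.2 subset_union_right)
  have hY' := hC.card_compl_union_eq C' ▸
    hC'.card_biUnion_le (compl_subset_compl.2 subset_union_right)
  have hunion : (#(B ∪ (R ∪ R')ᶜ.biUnion X' ∪ (C ∪ C')ᶜ.biUnion Y') : ℚ) ≤
      #B + #((R ∪ R')ᶜ.biUnion X') + #((C ∪ C')ᶜ.biUnion Y') := by
    exact_mod_cast (card_union_le _ _).trans (Nat.add_le_add_right (card_union_le _ _) _)
  have key := region_failures_lt (fNum_lt i) (fNum_lt j) hαi hαj (Nat.cast_nonneg _) hr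
    (Nat.cast_nonneg _) hc (by positivity)
  rw [← Nat.cast_lt (α := ℚ)]
  push_cast
  linarith

lemma union_ssubset_univ_of_ne {i j : Fin d} (hij : i ≠ j) {Fi Fj Fij : Finset (∀ l, A l)}
    (hFi : IsFailprone A i Fi) (hFj : IsFailprone A j Fj) (hFij_i : InFailproneStar A i Fij)
    (hFij_j : InFailproneStar A j Fij) : Fi ∪ Fj ∪ Fij ⊂ univ := by
  obtain ⟨R, X, hR⟩ := hFi
  obtain ⟨C, Y, hC⟩ := hFj
  obtain ⟨Gi, ⟨R', X', hR'⟩, hGi⟩ := hFij_i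
  obtain ⟨Gj, ⟨C', Y', hC'⟩, hGj⟩ := hFij_j
  refine union_ssubset_univ_of_card_lt (Ω := {p | p i ∈ Rᶜ ∧ p j ∈ Cᶜ}) ?_ ?_ ?_
    (card_region_failures_lt hij hR hC hR' hC')
  · intro p hp
    simp only [mem_inter, mem_filter, mem_univ, true_and] at hp
    exact hR.mem_biUnion_of_apply_mem subset_rfl hp.1 hp.2.1
  · intro p hp
    simp only [mem_inter, mem_filter, mem_univ, true_and] at hp
    exact hC.mem_biUnion_of_apply_mem subset_rfl hp.1 hp.2.2
  · intro p hp
    simp only [mem_inter, mem_filter, mem_univ, true_and, mem_compl] at hp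
    obtain ⟨hpF, hpR, hpC⟩ := hp
    by_cases hpR' : p i ∈ R'
    · by_cases hpC' : p j ∈ C'
      · simp [hpR', hpC', hpR, hpC]
      · refine mem_union_right _ (hC'.mem_biUnion_of_apply_mem
          (compl_subset_compl.2 subset_union_right) (hGj hpF) ?_)
        simp [hpC', hpC]
    · refine mem_union_left _ (mem_union_right _ (hR'.mem_biUnion_of_apply_mem
        (compl_subset_compl.2 subset_union_right) (hGi hpF) ?_))
      simp [hpR', hpR]

end Failprone

theorem stmt9_general (d : ℕ) (A : Fin d → Type) [∀ j, Fintype (A j)] [∀ j, DecidableEq (A j)]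
    (i j : Fin d)
    (Fi Fj Fij : Finset (∀ l, A l))
    (hFi : IsFailprone A i Fi) (hFj : IsFailprone A j Fj)
    (hFij_i : InFailproneStar A i Fij) (hFij_j : InFailproneStar A j Fij) :
    Fi ∪ Fj ∪ Fij ⊂ Finset.univ := by
  rcases eq_or_ne i j with rfl | hij
  · exact union_ssubset_univ_of_eq hFi hFj hFij_i
  · exact union_ssubset_univ_of_ne hij hFi hFj hFij_i hFij_j

/-- **B³ resilience of `𝔽`.**
The asymmetric grid failprone system `𝔽 = [ℱ_1, …, ℱ_d]` is B³-resilient: for all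
indices `i, j`, all `F_i ∈ ℱ_i`, `F_j ∈ ℱ_j`, and all `F_{i,j} ∈ ℱ_i* ∩ ℱ_j*`, the
union `F_i ∪ F_j ∪ F_{i,j}` is a proper subset of the universe `𝒫`. -/
theorem stmt9 (d : ℕ) (A : Fin d → Type) [∀ j, Fintype (A j)] [∀ j, DecidableEq (A j)]
    (hk : ∀ j, 4 ≤ Fintype.card (A j)) (i j : Fin d)
    (Fi Fj Fij : Finset (∀ l, A l))
    (hFi : IsFailprone A i Fi) (hFj : IsFailprone A j Fj)
    (hFij_i : InFailproneStar A i Fij) (hFij_j : InFailproneStar A j Fij) :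
    Fi ∪ Fj ∪ Fij ⊂ Finset.univ :=
  stmt9_general d A i j Fi Fj Fij hFi hFj hFij_i hFij_j
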